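/- Let Z ∼ N(0,1), S₁(λ) = E[(|Z| − λ)₊], S₂(λ) = E[(|Z| − λ)₊²]. Then for all λ ≥ 1: (1/2)·φ(λ)/λ² ≤ S₁(λ) ≤ 2·φ(λ)/λ² and (2/5)·φ(λ)/λ³ ≤ S₂(λ) ≤ 4·φ(λ)/λ³, where φ is the standard Gaussian density. -/

import Mathlib

/-!
By the symmetry of `φ`, `S₁(λ) = 2(φ(λ) - λQ(λ))` and
`S₂(λ) = 2((λ² + 1)Q(λ) - λφ(λ))`, where `Q(λ) = ∫_λ^∞ φ` is the Gaussian tail: integrate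
`(x - λ)φ` and `(x - λ)²φ` using `xφ = -φ'` and `(x² - 1)φ = -(xφ)'`. The four inequalities then
reduce to the rational Mills-ratio bounds
`(λ³ + 5λ) / (λ⁴ + 6λ² + 3) ≤ Q(λ) / φ(λ) ≤ (λ² + 2) / (λ³ + 3λ)`. Each of them is proved by
comparing `φ` with `-(φ r)'` for the corresponding rational function `r`, which is
`φ · (1 + 6 / (x³ + 3x)²)`, resp. `φ · (1 - 24 / (x⁴ + 6x² + 3)²)`.
-/

open MeasureTheory ProbabilityTheory Set
open scoped ENNReal NNReal Real

noncomputable section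

/-- The standard Gaussian density `φ(x) = (2π)^{-1/2} e^{-x²/2}`. -/
def gaussPhi (x : ℝ) : ℝ := (Real.sqrt (2 * Real.pi))⁻¹ * Real.exp (-x ^ 2 / 2)

open Real Filter Topology

lemma gaussPhi_eq_gaussianPDFReal : gaussPhi = gaussianPDFReal 0 1 := by
  ext x
  simp [gaussPhi, gaussianPDFReal]

lemma gaussPhi_pos (x : ℝ) : 0 < gaussPhi x := by
  rw [gaussPhi_eq_gaussianPDFReal]
  exact gaussianPDFReal_pos 0 1 x one_ne_zero

lemma gaussPhi_abs (x : ℝ) : gaussPhi |x| = gaussPhi x := by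
  simp only [gaussPhi, sq_abs]

lemma gaussPhi_integrable : Integrable gaussPhi := by
  rw [gaussPhi_eq_gaussianPDFReal]
  exact integrable_gaussianPDFReal 0 1

lemma hasDerivAt_gaussPhi (x : ℝ) : HasDerivAt gaussPhi (-(x * gaussPhi x)) x := by
  have h : HasDerivAt (fun y : ℝ => -y ^ 2 / 2) (-x) x :=
    ((hasDerivAt_pow 2 x).neg.div_const 2).congr_deriv (by ring)
  exact (h.exp.const_mul (√(2 * π))⁻¹).congr_deriv (by simp only [gaussPhi]; ring)

lemma pow_mul_gaussPhi_eq (n : ℕ) (x : ℝ) :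
    x ^ n * gaussPhi x = (√(2 * π))⁻¹ * (x ^ (n : ℝ) * exp (-(1 / 2) * x ^ 2)) := by
  rw [rpow_natCast, gaussPhi, show -x ^ 2 / 2 = -(1 / 2) * x ^ 2 by ring]
  ring

lemma integrable_pow_mul_gaussPhi (n : ℕ) : Integrable fun x => x ^ n * gaussPhi x := by
  simp_rw [pow_mul_gaussPhi_eq]
  exact (integrable_rpow_mul_exp_neg_mul_sq (by norm_num)
    (neg_one_lt_zero.trans_le n.cast_nonneg)).const_mul _

lemma integrable_mul_gaussPhi : Integrable fun x => x * gaussPhi x := by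
  simpa using integrable_pow_mul_gaussPhi 1

lemma tendsto_pow_mul_gaussPhi_atTop (n : ℕ) :
    Tendsto (fun x => x ^ n * gaussPhi x) atTop (𝓝 0) := by
  have hexp : Tendsto (fun x : ℝ => exp (-(1 / 2) * x)) atTop (𝓝 0) :=
    tendsto_exp_atBot.comp (tendsto_id.const_mul_atTop_of_neg (by norm_num))
  have h := ((rpow_mul_exp_neg_mul_sq_isLittleO_exp_neg (by norm_num : (0 : ℝ) < 1 / 2)
    n).isBigO.trans_tendsto hexp).const_mul (√(2 * π))⁻¹
  simp_rw [pow_mul_gaussPhi_eq]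
  simpa using h

lemma tendsto_gaussPhi_mul_atTop {r : ℝ → ℝ} {C : ℝ} (hr : ∀ᶠ x in atTop, |r x| ≤ C) :
    Tendsto (fun x => gaussPhi x * r x) atTop (𝓝 0) := by
  have hφ : Tendsto (fun x => C * gaussPhi x) atTop (𝓝 0) := by
    simpa using (tendsto_pow_mul_gaussPhi_atTop 0).const_mul C
  refine squeeze_zero_norm' ?_ hφ
  filter_upwards [hr] with x hx
  rw [norm_mul, norm_of_nonneg (gaussPhi_pos x).le, mul_comm]
  exact mul_le_mul_of_nonneg_right hx (gaussPhi_pos x).le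

lemma hasDerivAt_gaussPhi_mul {r : ℝ → ℝ} {r' x : ℝ} (hr : HasDerivAt r r' x) :
    HasDerivAt (fun y => gaussPhi y * r y) (gaussPhi x * (r' - x * r x)) x :=
  ((hasDerivAt_gaussPhi x).mul hr).congr_deriv (by ring)

section TailIntegral

variable {f g G : ℝ → ℝ} {a : ℝ}

lemma integrableOn_Ioi_of_hasDerivAt (hG : ∀ x ∈ Ici a, HasDerivAt G (-g x) x)
    (hg : ∀ x ∈ Ioi a, 0 ≤ g x) (hG_top : Tendsto G atTop (𝓝 0)) : IntegrableOn g (Ioi a) :=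
  integrableOn_Ioi_deriv_of_nonneg' (g := fun y => -G y)
    (fun x hx => (hG x hx).neg.congr_deriv (neg_neg _)) hg (by simpa using hG_top.neg)

lemma integral_Ioi_eq_of_hasDerivAt (hG : ∀ x ∈ Ici a, HasDerivAt G (-g x) x)
    (hg : IntegrableOn g (Ioi a)) (hG_top : Tendsto G atTop (𝓝 0)) :
    ∫ x in Ioi a, g x = G a := by
  rw [integral_Ioi_of_hasDerivAt_of_tendsto' (f := fun y => -G y)
    (fun x hx => (hG x hx).neg.congr_deriv (neg_neg _)) hg (by simpa using hG_top.neg)]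
  simp

lemma integral_Ioi_le_of_hasDerivAt (hG : ∀ x ∈ Ici a, HasDerivAt G (-g x) x)
    (hg : ∀ x ∈ Ioi a, 0 ≤ g x) (hG_top : Tendsto G atTop (𝓝 0))
    (hf : IntegrableOn f (Ioi a)) (hfg : ∀ x ∈ Ioi a, f x ≤ g x) :
    ∫ x in Ioi a, f x ≤ G a := by
  have hint := integrableOn_Ioi_of_hasDerivAt hG hg hG_top
  calc ∫ x in Ioi a, f x ≤ ∫ x in Ioi a, g x := setIntegral_mono_on hf hint measurableSet_Ioi hfg
    _ = G a := integral_Ioi_eq_of_hasDerivAt hG hint hG_top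

lemma le_integral_Ioi_of_hasDerivAt (hG : ∀ x ∈ Ici a, HasDerivAt G (-g x) x)
    (hg : ∀ x ∈ Ioi a, 0 ≤ g x) (hG_top : Tendsto G atTop (𝓝 0))
    (hf : IntegrableOn f (Ioi a)) (hgf : ∀ x ∈ Ioi a, g x ≤ f x) :
    G a ≤ ∫ x in Ioi a, f x := by
  have hint := integrableOn_Ioi_of_hasDerivAt hG hg hG_top
  calc G a = ∫ x in Ioi a, g x := (integral_Ioi_eq_of_hasDerivAt hG hint hG_top).symm
    _ ≤ ∫ x in Ioi a, f x := setIntegral_mono_on hint hf measurableSet_Ioi hgf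

end TailIntegral

lemma integral_Ioi_mul_gaussPhi (a : ℝ) : ∫ x in Ioi a, x * gaussPhi x = gaussPhi a :=
  integral_Ioi_eq_of_hasDerivAt (fun x _ => hasDerivAt_gaussPhi x)
    integrable_mul_gaussPhi.integrableOn
    (by simpa using tendsto_pow_mul_gaussPhi_atTop 0)

lemma integral_Ioi_sq_sub_one_mul_gaussPhi (a : ℝ) :
    ∫ x in Ioi a, (x ^ 2 - 1) * gaussPhi x = a * gaussPhi a := by
  refine integral_Ioi_eq_of_hasDerivAt (G := fun x => x * gaussPhi x) (fun x _ => ?_) ?_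
    (by simpa using tendsto_pow_mul_gaussPhi_atTop 1)
  · exact ((hasDerivAt_id x).mul (hasDerivAt_gaussPhi x)).congr_deriv
      (by simp only [id_eq]; ring)
  · simp_rw [sub_mul, one_mul]
    exact ((integrable_pow_mul_gaussPhi 2).sub gaussPhi_integrable).integrableOn

def gaussTail (a : ℝ) : ℝ := ∫ x in Ioi a, gaussPhi x

/- `(x² + 2) / (x³ + 3x)` and `(x³ + 5x) / (x⁴ + 6x² + 3)` are the third and fourth convergents
of Laplace's continued fraction `1 / (x + 1 / (x + 2 / (x + 3 / (x + ⋯))))` for the Mills ratio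
`gaussTail x / gaussPhi x`, which they bound from above and below. -/
lemma hasDerivAt_gaussPhi_mul_millsUpper {x : ℝ} (hx : 0 < x) :
    HasDerivAt (fun y => gaussPhi y * ((y ^ 2 + 2) / (y ^ 3 + 3 * y)))
      (-(gaussPhi x * (1 + 6 / (x ^ 3 + 3 * x) ^ 2))) x := by
  have hD : x ^ 3 + 3 * x ≠ 0 := by positivity
  have hN' : HasDerivAt (fun y => y ^ 2 + 2) (2 * x) x :=
    ((hasDerivAt_pow 2 x).add_const 2).congr_deriv (by ring)
  have hD' : HasDerivAt (fun y => y ^ 3 + 3 * y) (3 * x ^ 2 + 3) x :=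
    ((hasDerivAt_pow 3 x).add ((hasDerivAt_id x).const_mul 3)).congr_deriv (by simp)
  exact (hasDerivAt_gaussPhi_mul (hN'.div hD' hD)).congr_deriv
    (by simp only [Pi.div_apply]; field_simp; ring)

lemma hasDerivAt_gaussPhi_mul_millsLower (x : ℝ) :
    HasDerivAt (fun y => gaussPhi y * ((y ^ 3 + 5 * y) / (y ^ 4 + 6 * y ^ 2 + 3)))
      (-(gaussPhi x * (1 - 24 / (x ^ 4 + 6 * x ^ 2 + 3) ^ 2))) x := by
  have hD : x ^ 4 + 6 * x ^ 2 + 3 ≠ 0 := by positivity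
  have hN' : HasDerivAt (fun y => y ^ 3 + 5 * y) (3 * x ^ 2 + 5) x :=
    ((hasDerivAt_pow 3 x).add ((hasDerivAt_id x).const_mul 5)).congr_deriv (by simp)
  have hD' : HasDerivAt (fun y => y ^ 4 + 6 * y ^ 2 + 3) (4 * x ^ 3 + 12 * x) x :=
    (((hasDerivAt_pow 4 x).add ((hasDerivAt_pow 2 x).const_mul 6)).add_const 3).congr_deriv
      (by ring)
  exact (hasDerivAt_gaussPhi_mul (hN'.div hD' hD)).congr_deriv
    (by simp only [Pi.div_apply]; field_simp; ring)

lemma gaussTail_mul_le {a : ℝ} (ha : 0 < a) :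
    gaussTail a * (a ^ 3 + 3 * a) ≤ gaussPhi a * (a ^ 2 + 2) := by
  have hD : 0 < a ^ 3 + 3 * a := by positivity
  have hG_top : Tendsto (fun y => gaussPhi y * ((y ^ 2 + 2) / (y ^ 3 + 3 * y))) atTop (𝓝 0) := by
    refine tendsto_gaussPhi_mul_atTop (C := 3) ?_
    filter_upwards [eventually_ge_atTop 1] with x hx
    rw [abs_of_nonneg (by positivity), div_le_iff₀ (by positivity)]
    nlinarith
  have h := integral_Ioi_le_of_hasDerivAt
    (fun x hx => hasDerivAt_gaussPhi_mul_millsUpper (ha.trans_le hx))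
    (fun x _ => mul_nonneg (gaussPhi_pos x).le (by positivity)) hG_top
    gaussPhi_integrable.integrableOn
    (fun x _ => le_mul_of_one_le_right (gaussPhi_pos x).le
      (le_add_of_nonneg_right (by positivity)))
  rwa [← gaussTail, ← mul_div_assoc, le_div_iff₀ hD] at h

lemma mul_le_gaussTail {a : ℝ} (ha : 1 ≤ a) :
    gaussPhi a * (a ^ 3 + 5 * a) ≤ gaussTail a * (a ^ 4 + 6 * a ^ 2 + 3) := by
  have hG_top : Tendsto (fun y => gaussPhi y * ((y ^ 3 + 5 * y) / (y ^ 4 + 6 * y ^ 2 + 3)))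
      atTop (𝓝 0) := by
    refine tendsto_gaussPhi_mul_atTop (C := 1) ?_
    filter_upwards [eventually_ge_atTop 1] with x hx
    rw [abs_of_nonneg (by positivity), div_le_iff₀ (by positivity)]
    nlinarith [mul_le_mul_of_nonneg_left hx (by positivity : (0 : ℝ) ≤ x ^ 3)]
  have hg : ∀ x ∈ Ioi a, 0 ≤ gaussPhi x * (1 - 24 / (x ^ 4 + 6 * x ^ 2 + 3) ^ 2) := by
    intro x hx
    have hx1 : 1 ≤ x := ha.trans hx.le
    refine mul_nonneg (gaussPhi_pos x).le (sub_nonneg.2 ?_)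
    rw [div_le_one (by positivity)]
    nlinarith [pow_le_pow_left₀ zero_le_one hx1 4, pow_le_pow_left₀ zero_le_one hx1 2]
  have h := le_integral_Ioi_of_hasDerivAt (fun x _ => hasDerivAt_gaussPhi_mul_millsLower x) hg
    hG_top gaussPhi_integrable.integrableOn
    (fun x _ => mul_le_of_le_one_right (gaussPhi_pos x).le (sub_le_self _ (by positivity)))
  rwa [← gaussTail, ← mul_div_assoc, div_le_iff₀ (by positivity)] at h

lemma integral_gaussianReal_comp_abs (f : ℝ → ℝ) :
    ∫ z, f |z| ∂gaussianReal 0 1 = 2 * ∫ x in Ioi 0, f x * gaussPhi x := by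
  have h : ∀ z, gaussianPDFReal 0 1 z • f |z| = (fun t => f t * gaussPhi t) |z| := fun z => by
    show _ = f |z| * gaussPhi |z|
    rw [smul_eq_mul, gaussPhi_abs, gaussPhi_eq_gaussianPDFReal, mul_comm]
  rw [integral_gaussianReal_eq_integral_smul one_ne_zero, integral_congr_ae (ae_of_all _ h)]
  exact integral_comp_abs (f := fun t => f t * gaussPhi t)

lemma integral_gaussianReal_comp_posPart_abs_sub {g : ℝ → ℝ} (hg0 : g 0 = 0) {lam : ℝ}
    (hlam : 0 ≤ lam) :
    ∫ z, g (max (|z| - lam) 0) ∂gaussianReal 0 1 =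
      2 * ∫ x in Ioi lam, g (x - lam) * gaussPhi x := by
  rw [integral_gaussianReal_comp_abs fun t => g (max (t - lam) 0),
    setIntegral_eq_of_subset_of_forall_sdiff_eq_zero measurableSet_Ioi (Ioi_subset_Ioi hlam)]
  · refine congrArg _ (setIntegral_congr_fun measurableSet_Ioi fun x hx => ?_)
    rw [max_eq_left (sub_nonneg.2 (le_of_lt hx))]
  · rintro x ⟨-, hx⟩
    rw [max_eq_right (sub_nonpos.2 (not_lt.1 hx)), hg0, zero_mul]

lemma integral_posPart_abs_sub_gaussianReal {lam : ℝ} (hlam : 0 ≤ lam) :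
    ∫ z, max (|z| - lam) 0 ∂gaussianReal 0 1 = 2 * (gaussPhi lam - lam * gaussTail lam) := by
  have hA : IntegrableOn (fun x => x * gaussPhi x) (Ioi lam) :=
    integrable_mul_gaussPhi.integrableOn
  have hB : IntegrableOn (fun x => lam * gaussPhi x) (Ioi lam) :=
    gaussPhi_integrable.integrableOn.const_mul lam
  simp_rw [integral_gaussianReal_comp_posPart_abs_sub (g := fun t => t) rfl hlam, sub_mul]
  rw [integral_sub hA hB, integral_Ioi_mul_gaussPhi, integral_const_mul, gaussTail]

lemma integral_sq_posPart_abs_sub_gaussianReal {lam : ℝ} (hlam : 0 ≤ lam) :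
    ∫ z, max (|z| - lam) 0 ^ 2 ∂gaussianReal 0 1 =
      2 * ((lam ^ 2 + 1) * gaussTail lam - lam * gaussPhi lam) := by
  have hA : IntegrableOn (fun x => (x ^ 2 - 1) * gaussPhi x) (Ioi lam) := by
    simp_rw [sub_mul, one_mul]
    exact ((integrable_pow_mul_gaussPhi 2).sub gaussPhi_integrable).integrableOn
  have hB : IntegrableOn (fun x => 2 * lam * (x * gaussPhi x)) (Ioi lam) :=
    integrable_mul_gaussPhi.integrableOn.const_mul _
  have hC : IntegrableOn (fun x => (lam ^ 2 + 1) * gaussPhi x) (Ioi lam) :=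
    gaussPhi_integrable.integrableOn.const_mul _
  have hsplit : ∀ x, (x - lam) ^ 2 * gaussPhi x =
      ((x ^ 2 - 1) * gaussPhi x - 2 * lam * (x * gaussPhi x)) + (lam ^ 2 + 1) * gaussPhi x :=
    fun x => by ring
  simp_rw [integral_gaussianReal_comp_posPart_abs_sub (g := fun t => t ^ 2) (by simp) hlam, hsplit]
  have hAB : IntegrableOn (fun x => (x ^ 2 - 1) * gaussPhi x - 2 * lam * (x * gaussPhi x))
      (Ioi lam) := hA.sub hB
  rw [integral_add hAB hC, integral_sub hA hB, integral_const_mul, integral_const_mul,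
    integral_Ioi_sq_sub_one_mul_gaussPhi, integral_Ioi_mul_gaussPhi, gaussTail]
  ring

lemma moment_bounds_of_mills_bounds {lam p q : ℝ} (hlam : 1 ≤ lam) (hp : 0 < p)
    (hup : q * (lam ^ 3 + 3 * lam) ≤ p * (lam ^ 2 + 2))
    (hlow : p * (lam ^ 3 + 5 * lam) ≤ q * (lam ^ 4 + 6 * lam ^ 2 + 3)) :
    ((1 / 2) * (p / lam ^ 2) ≤ 2 * (p - lam * q) ∧ 2 * (p - lam * q) ≤ 2 * (p / lam ^ 2)) ∧
    ((2 / 5) * (p / lam ^ 3) ≤ 2 * ((lam ^ 2 + 1) * q - lam * p) ∧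
      2 * ((lam ^ 2 + 1) * q - lam * p) ≤ 4 * (p / lam ^ 3)) := by
  have hlam0 : 0 < lam := one_pos.trans_le hlam
  have hsq : 1 ≤ lam ^ 2 := one_le_pow₀ hlam
  -- With `M = q / p`: `1 / (λ² + 3) ≤ 1 - λM ≤ (λ² + 3) / (λ⁴ + 6λ² + 3)`.
  have hA : p ≤ (p - lam * q) * (lam ^ 2 + 3) := by linear_combination hup
  have hB : (p - lam * q) * (lam ^ 4 + 6 * lam ^ 2 + 3) ≤ p * (lam ^ 2 + 3) := by
    linear_combination lam * hlow
  -- `λ((λ² + 1)q - λp) = p - (λ² + 1)(p - λq)`, so `hA`, `hB` also bound the second moment.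
  have hC : 2 * lam ^ 4 * p ≤
      lam ^ 3 * ((lam ^ 2 + 1) * q - lam * p) * (lam ^ 4 + 6 * lam ^ 2 + 3) := by
    linear_combination lam ^ 2 * (lam ^ 2 + 1) * hB
  have hD : lam * ((lam ^ 2 + 1) * q - lam * p) * (lam ^ 2 + 3) ≤ 2 * p := by
    linear_combination (lam ^ 2 + 1) * hA
  have hu : 0 ≤ p - lam * q := by nlinarith
  have hv : 0 ≤ (lam ^ 2 + 1) * q - lam * p := by nlinarith
  refine ⟨⟨?_, ?_⟩, ?_, ?_⟩
  · rw [mul_div_assoc', div_le_iff₀ (by positivity)]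
    nlinarith [mul_le_mul_of_nonneg_left hsq hu]
  · rw [mul_div_assoc', le_div_iff₀ (by positivity)]
    nlinarith [mul_le_mul_of_nonneg_left hsq hp.le]
  · rw [mul_div_assoc', div_le_iff₀ (by positivity)]
    nlinarith [mul_le_mul_of_nonneg_left hsq hp.le,
      mul_le_mul_of_nonneg_left (pow_le_pow_left₀ zero_le_one hsq 2) hp.le]
  · rw [mul_div_assoc', le_div_iff₀ (by positivity)]
    nlinarith [mul_nonneg hlam0.le hv]

/-- For `Z ∼ N(0,1)`, `S₁(λ) = E[(|Z|−λ)₊]`, `S₂(λ) = E[(|Z|−λ)₊²]`,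
and all `λ ≥ 1`: `(1/2)φ(λ)/λ² ≤ S₁(λ) ≤ 2φ(λ)/λ²` and
`(2/5)φ(λ)/λ³ ≤ S₂(λ) ≤ 4φ(λ)/λ³`. -/
theorem statement16 (lam : ℝ) (hlam : 1 ≤ lam) :
    ((1 / 2) * (gaussPhi lam / lam ^ 2) ≤ ∫ z, max (|z| - lam) 0 ∂(gaussianReal 0 1) ∧
      (∫ z, max (|z| - lam) 0 ∂(gaussianReal 0 1)) ≤ 2 * (gaussPhi lam / lam ^ 2)) ∧
    ((2 / 5) * (gaussPhi lam / lam ^ 3) ≤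
        ∫ z, (max (|z| - lam) 0) ^ 2 ∂(gaussianReal 0 1) ∧
      (∫ z, (max (|z| - lam) 0) ^ 2 ∂(gaussianReal 0 1)) ≤
        4 * (gaussPhi lam / lam ^ 3)) := by
  have hlam0 : 0 < lam := one_pos.trans_le hlam
  rw [integral_posPart_abs_sub_gaussianReal hlam0.le,
    integral_sq_posPart_abs_sub_gaussianReal hlam0.le]
  exact moment_bounds_of_mills_bounds hlam (gaussPhi_pos lam) (gaussTail_mul_le hlam0)
    (mul_le_gaussTail hlam)
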